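/- Let d = 2 and Ω := [0,2]² ⊆ ℝ². Set μ₀ := δ_{(0,0)}, μ₁ := δ_{(π/2,0)}, and ν := ½·δ_{(π/4,0)}. Then HK(μ₀,ν) = HK(ν,μ₁) = ½·HK(μ₀,μ₁) (so ν is a metric midpoint of μ₀ and μ₁ for HK), and for every K ∈ ℝ there exist b > 0 and y ∈ (0, √3·π/4) such that, with μ* := b·δ_{(π/4,y)}, one has HK(ν,μ*)² < ½·HK(μ₀,μ*)² + ½·HK(μ₁,μ*)² − (K/4)·HK(μ₀,μ₁)². Consequently, HK on measures over a two-dimensional domain is not K-semiconcave for any K ∈ ℝ. -/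

import Mathlib

open MeasureTheory Set
open scoped NNReal ENNReal

/-- The ambient Euclidean space `ℝ^d`. -/
noncomputable abbrev Euc (d : ℕ) := EuclideanSpace ℝ (Fin d)

/-- `cos_π(a) := cos (min |a| π)`. -/
noncomputable def cosPi (a : ℝ) : ℝ := Real.cos (min |a| Real.pi)

/-- The cone distance on `ℝ^d × [0,∞)`:
`d_C((x₀,r₀),(x₁,r₁)) = √(r₀² + r₁² − 2r₀r₁ cos_π(|x₁−x₀|))`.
All points with `r = 0` are identified with the tip of the cone. -/
noncomputable def coneDist {d : ℕ} (z₀ z₁ : Euc d × ℝ≥0) : ℝ :=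
  Real.sqrt ((z₀.2 : ℝ)^2 + (z₁.2 : ℝ)^2
    - 2 * (z₀.2 : ℝ) * (z₁.2 : ℝ) * cosPi (dist z₁.1 z₀.1))

/-- `γ` is a plan on (the cone over) `Ω` with homogeneous marginals `(μ₀, μ₁)`:
a finite nonnegative Borel measure on `(Ω×[0,∞))²` such that
`∬ rᵢ² φ(xᵢ) dγ = ∫ φ dμᵢ` for every (bounded) continuous `φ` and `i = 0,1`. -/
def IsHKPlan {d : ℕ} (Ω : Set (Euc d)) (γ : Measure ((Euc d × ℝ≥0) × (Euc d × ℝ≥0)))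
    (μ₀ μ₁ : Measure (Euc d)) : Prop :=
  IsFiniteMeasure γ ∧
  γ (((Ω ×ˢ (univ : Set ℝ≥0)) ×ˢ (Ω ×ˢ (univ : Set ℝ≥0)))ᶜ) = 0 ∧
  (∀ φ : BoundedContinuousFunction (Euc d) ℝ,
    ∫ p, (p.1.2 : ℝ)^2 * φ p.1.1 ∂γ = ∫ x, φ x ∂μ₀) ∧
  (∀ φ : BoundedContinuousFunction (Euc d) ℝ,
    ∫ p, (p.2.2 : ℝ)^2 * φ p.2.1 ∂γ = ∫ x, φ x ∂μ₁)

/-- The squared Hellinger–Kantorovich distance: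
`HK(μ₀,μ₁)² = inf { ∬ d_C(z₀,z₁)² dγ : γ a plan with homogeneous marginals (μ₀,μ₁) }`. -/
noncomputable def HK2 {d : ℕ} (Ω : Set (Euc d)) (μ₀ μ₁ : Measure (Euc d)) : ℝ :=
  sInf { I : ℝ | ∃ γ, IsHKPlan Ω γ μ₀ μ₁ ∧ I = ∫ p, (coneDist p.1 p.2)^2 ∂γ }

/-- The Hellinger–Kantorovich distance on finite nonnegative Borel measures on `Ω`. -/
noncomputable def HK {d : ℕ} (Ω : Set (Euc d)) (μ₀ μ₁ : Measure (Euc d)) : ℝ :=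
  Real.sqrt (HK2 Ω μ₀ μ₁)

/-- A point of the Euclidean plane with the given coordinates. -/
noncomputable def pt2 (a b : ℝ) : Euc 2 := (WithLp.equiv 2 (Fin 2 → ℝ)).symm ![a, b]

/-!
Between two Dirac masses `a δ_x` and `b δ_y` with `|x - y| ≤ π/2` the optimal plan is the Dirac
mass at `((x, √a), (y, √b))`, so `HK² = a + b - 2√(ab) cos |x - y|`. For the lower bound: a plan
with these homogeneous marginals only charges cone points over `x` (resp. `y`) or at the tip, and
there `√(ab) d_C² ≥ (√(ab) - b c) r₀² + (√(ab) - a c) r₁²` with `c = cos |x - y| ≥ 0` (a weighted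
AM-GM); integrating against the marginals gives `√(ab) ∫ d_C² ≥ √(ab) (a + b - 2√(ab) c)`.

In the example all distances are at most `π/2`. The point of `μ* = s² δ_{(π/4,π/4)}` lies at
distance `π/4` from that of `ν` but at distance `π√2/4 > π/3` from those of `μ₀` and `μ₁`, so
`c = cos (π√2/4) < 1/2` and `HK(ν,μ*)² - ½HK(μ₀,μ*)² - ½HK(μ₁,μ*)² = s (2c - 1) - ½` is unbounded
below as `s → ∞`.
-/

open Real

section ConeDistance

variable {d : ℕ}

lemma coneDist_sq (z₀ z₁ : Euc d × ℝ≥0) :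
    coneDist z₀ z₁ ^ 2 = (z₀.2 : ℝ) ^ 2 + (z₁.2 : ℝ) ^ 2
      - 2 * z₀.2 * z₁.2 * cosPi (dist z₁.1 z₀.1) := by
  refine sq_sqrt ?_
  have : cosPi (dist z₁.1 z₀.1) ≤ 1 := cos_le_one _
  nlinarith [sq_nonneg ((z₀.2 : ℝ) - z₁.2), mul_nonneg z₀.2.coe_nonneg z₁.2.coe_nonneg]

lemma coneDist_sq_of_dist_le_pi {z₀ z₁ : Euc d × ℝ≥0} (h : dist z₀.1 z₁.1 ≤ π) :
    coneDist z₀ z₁ ^ 2 = (z₀.2 : ℝ) ^ 2 + (z₁.2 : ℝ) ^ 2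
      - 2 * z₀.2 * z₁.2 * cos (dist z₀.1 z₁.1) := by
  rw [coneDist_sq, cosPi, dist_comm, abs_of_nonneg dist_nonneg, min_eq_left h]

lemma coneDist_sq_le (z₀ z₁ : Euc d × ℝ≥0) :
    coneDist z₀ z₁ ^ 2 ≤ 2 * ((z₀.2 : ℝ) ^ 2 + (z₁.2 : ℝ) ^ 2) := by
  rw [coneDist_sq]
  have : -1 ≤ cosPi (dist z₁.1 z₀.1) := neg_one_le_cos _
  nlinarith [sq_nonneg ((z₀.2 : ℝ) - z₁.2),
    mul_nonneg (mul_nonneg z₀.2.coe_nonneg z₁.2.coe_nonneg) (neg_le_iff_add_nonneg'.mp this)]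

lemma continuous_coneDist_sq :
    Continuous fun p : (Euc d × ℝ≥0) × (Euc d × ℝ≥0) => coneDist p.1 p.2 ^ 2 := by
  unfold coneDist cosPi
  fun_prop

lemma mul_coneDist_sq_ge {x y : Euc d} (hd : dist x y ≤ π / 2) (u v : ℝ)
    {z₀ z₁ : Euc d × ℝ≥0} (h₀ : z₀.2 = 0 ∨ z₀.1 = x) (h₁ : z₁.2 = 0 ∨ z₁.1 = y) :
    (u * v - cos (dist x y) * v ^ 2) * (z₀.2 : ℝ) ^ 2
        + (u * v - cos (dist x y) * u ^ 2) * (z₁.2 : ℝ) ^ 2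
      ≤ u * v * coneDist z₀ z₁ ^ 2 := by
  have hc : 0 ≤ cos (dist x y) :=
    cos_nonneg_of_mem_Icc ⟨by linarith [dist_nonneg (x := x) (y := y), pi_pos], hd⟩
  rcases h₀ with h₀ | h₀
  · rw [coneDist_sq, h₀, NNReal.coe_zero]
    nlinarith [mul_nonneg hc (sq_nonneg (u * z₁.2))]
  rcases h₁ with h₁ | h₁
  · rw [coneDist_sq, h₁, NNReal.coe_zero]
    nlinarith [mul_nonneg hc (sq_nonneg (v * z₀.2))]
  rw [coneDist_sq_of_dist_le_pi (by linarith [pi_pos, h₀ ▸ h₁ ▸ hd]), h₀, h₁]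
  nlinarith [mul_nonneg hc (sq_nonneg (v * z₀.2 - u * z₁.2))]

end ConeDistance

noncomputable def truncatedDist {X : Type*} [PseudoMetricSpace X] (x : X) :
    BoundedContinuousFunction X ℝ :=
  .mkOfBound ⟨fun z => min (dist z x) 1, by fun_prop⟩ 1 fun _ _ =>
    Real.dist_le_of_mem_Icc_01 ⟨le_min dist_nonneg zero_le_one, min_le_right _ _⟩
      ⟨le_min dist_nonneg zero_le_one, min_le_right _ _⟩

section HomogeneousMarginal

variable {d : ℕ} {α : Type*} [MeasurableSpace α]

def HasHomMarginal (γ : Measure α) (f : α → Euc d × ℝ≥0) (μ : Measure (Euc d)) : Prop :=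
  ∀ φ : BoundedContinuousFunction (Euc d) ℝ, ∫ p, ((f p).2 : ℝ) ^ 2 * φ (f p).1 ∂γ = ∫ z, φ z ∂μ

variable {γ : Measure α} {f : α → Euc d × ℝ≥0} {x : Euc d} {a : ℝ}

lemma HasHomMarginal.integral_sq_eq (h : HasHomMarginal γ f (ENNReal.ofReal a • Measure.dirac x))
    (ha : 0 ≤ a) : ∫ p, ((f p).2 : ℝ) ^ 2 ∂γ = a := by
  simpa [integral_smul_measure, ha] using h (.const _ 1)

lemma HasHomMarginal.integrable_sq (h : HasHomMarginal γ f (ENNReal.ofReal a • Measure.dirac x))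
    (ha : 0 < a) : Integrable (fun p => ((f p).2 : ℝ) ^ 2) γ := by
  by_contra hf
  exact ha.ne (integral_undef hf ▸ h.integral_sq_eq ha.le)

lemma HasHomMarginal.ae_eq_zero_or_eq [TopologicalSpace α] [OpensMeasurableSpace α]
    (h : HasHomMarginal γ f (ENNReal.ofReal a • Measure.dirac x)) (hf : Continuous f)
    (ha : 0 < a) : ∀ᵐ p ∂γ, (f p).2 = 0 ∨ (f p).1 = x := by
  have hzero : ∫ p, ((f p).2 : ℝ) ^ 2 * min (dist (f p).1 x) 1 ∂γ = 0 := by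
    simpa [truncatedDist, integral_smul_measure] using h (truncatedDist x)
  have hint : Integrable (fun p => ((f p).2 : ℝ) ^ 2 * min (dist (f p).1 x) 1) γ := by
    refine (h.integrable_sq ha).mono (by fun_prop) (ae_of_all _ fun p => ?_)
    rw [norm_mul]
    refine mul_le_of_le_one_right (norm_nonneg _) ?_
    rw [norm_of_nonneg (le_min dist_nonneg zero_le_one)]
    exact min_le_right _ _
  filter_upwards [(integral_eq_zero_iff_of_nonneg (fun p => by positivity) hint).mp hzero]
    with p hp
  rcases mul_eq_zero.mp hp with hr | hm
  · exact .inl (by simpa using hr)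
  · exact .inr (dist_eq_zero.mp ((min_eq_iff.mp hm).resolve_right fun h => one_ne_zero h.1).1)

end HomogeneousMarginal

lemma IsHKPlan.hasHomMarginal_fst {d : ℕ} {Ω : Set (Euc d)}
    {γ : Measure ((Euc d × ℝ≥0) × (Euc d × ℝ≥0))} {μ₀ μ₁ : Measure (Euc d)}
    (h : IsHKPlan Ω γ μ₀ μ₁) : HasHomMarginal γ Prod.fst μ₀ :=
  h.2.2.1

lemma IsHKPlan.hasHomMarginal_snd {d : ℕ} {Ω : Set (Euc d)}
    {γ : Measure ((Euc d × ℝ≥0) × (Euc d × ℝ≥0))} {μ₀ μ₁ : Measure (Euc d)}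
    (h : IsHKPlan Ω γ μ₀ μ₁) : HasHomMarginal γ Prod.snd μ₁ :=
  h.2.2.2

lemma HK2_nonneg {d : ℕ} (Ω : Set (Euc d)) (μ₀ μ₁ : Measure (Euc d)) : 0 ≤ HK2 Ω μ₀ μ₁ :=
  Real.sInf_nonneg <| by
    rintro _ ⟨γ, -, rfl⟩
    exact integral_nonneg fun p => sq_nonneg _

lemma HK_sq {d : ℕ} (Ω : Set (Euc d)) (μ₀ μ₁ : Measure (Euc d)) :
    HK Ω μ₀ μ₁ ^ 2 = HK2 Ω μ₀ μ₁ :=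
  sq_sqrt (HK2_nonneg Ω μ₀ μ₁)

section DiracMasses

variable {d : ℕ} {Ω : Set (Euc d)} {x y : Euc d} {a b : ℝ}

lemma isHKPlan_dirac (hx : x ∈ Ω) (hy : y ∈ Ω) (ha : 0 ≤ a) (hb : 0 ≤ b) :
    IsHKPlan Ω (Measure.dirac ((x, (√a).toNNReal), (y, (√b).toNNReal)))
      (ENNReal.ofReal a • Measure.dirac x) (ENNReal.ofReal b • Measure.dirac y) := by
  refine ⟨inferInstance, ?_, fun φ => ?_, fun φ => ?_⟩
  · simp [Measure.dirac_apply, hx, hy]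
  · simp [integral_smul_measure, ha]
  · simp [integral_smul_measure, hb]

lemma integral_coneDist_sq_dirac (ha : 0 ≤ a) (hb : 0 ≤ b) (hd : dist x y ≤ π) :
    ∫ p, coneDist p.1 p.2 ^ 2 ∂(Measure.dirac ((x, (√a).toNNReal), (y, (√b).toNNReal)))
      = a + b - 2 * √(a * b) * cos (dist x y) := by
  rw [integral_dirac, coneDist_sq_of_dist_le_pi (z₀ := (x, _)) (z₁ := (y, _)) hd]
  simp only [Real.coe_toNNReal _ (sqrt_nonneg _), sq_sqrt ha, sq_sqrt hb, sqrt_mul ha]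
  ring

lemma le_integral_coneDist_sq (ha : 0 < a) (hb : 0 < b) (hd : dist x y ≤ π / 2)
    {γ : Measure ((Euc d × ℝ≥0) × (Euc d × ℝ≥0))}
    (hγ : IsHKPlan Ω γ (ENNReal.ofReal a • Measure.dirac x) (ENNReal.ofReal b • Measure.dirac y)) :
    a + b - 2 * √(a * b) * cos (dist x y) ≤ ∫ p, coneDist p.1 p.2 ^ 2 ∂γ := by
  have h₀ := hγ.hasHomMarginal_fst
  have h₁ := hγ.hasHomMarginal_snd
  have hint₀ := h₀.integrable_sq ha
  have hint₁ := h₁.integrable_sq hb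
  have hint : Integrable (fun p => coneDist p.1 p.2 ^ 2) γ :=
    ((hint₀.add hint₁).const_mul 2).mono' continuous_coneDist_sq.aestronglyMeasurable
      (ae_of_all _ fun p => (norm_of_nonneg (sq_nonneg _)).trans_le (coneDist_sq_le p.1 p.2))
  have hbound := integral_mono_ae ((hint₀.const_mul _).add (hint₁.const_mul _))
    (hint.const_mul (√a * √b)) <| by
      filter_upwards [h₀.ae_eq_zero_or_eq continuous_fst ha, h₁.ae_eq_zero_or_eq continuous_snd hb]
        with p hp₀ hp₁ using mul_coneDist_sq_ge hd (√a) (√b) hp₀ hp₁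
  simp only [Pi.add_apply] at hbound
  rw [integral_add (hint₀.const_mul _) (hint₁.const_mul _), integral_const_mul, integral_const_mul,
    integral_const_mul, h₀.integral_sq_eq ha.le, h₁.integral_sq_eq hb.le, sq_sqrt ha.le,
    sq_sqrt hb.le] at hbound
  refine le_of_mul_le_mul_left ?_ (by positivity : 0 < √a * √b)
  rw [sqrt_mul ha.le]
  linear_combination hbound - 2 * cos (dist x y) * (√b * √b) * mul_self_sqrt ha.le
    - 2 * cos (dist x y) * a * mul_self_sqrt hb.le

lemma HK2_smul_dirac_smul_dirac (hx : x ∈ Ω) (hy : y ∈ Ω) (ha : 0 < a) (hb : 0 < b)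
    (hd : dist x y ≤ π / 2) :
    HK2 Ω (ENNReal.ofReal a • Measure.dirac x) (ENNReal.ofReal b • Measure.dirac y)
      = a + b - 2 * √(a * b) * cos (dist x y) := by
  refine IsLeast.csInf_eq ⟨⟨_, isHKPlan_dirac hx hy ha.le hb.le, ?_⟩, ?_⟩
  · exact (integral_coneDist_sq_dirac ha.le hb.le (by linarith [pi_pos])).symm
  · rintro _ ⟨γ, hγ, rfl⟩
    exact le_integral_coneDist_sq ha hb hd hγ

lemma HK2_smul_dirac_smul_dirac_of_dist_eq_pi_div_four (hx : x ∈ Ω) (hy : y ∈ Ω) (ha : 0 < a)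
    (hb : 0 < b) (hd : dist x y = π / 4) :
    HK2 Ω (ENNReal.ofReal a • Measure.dirac x) (ENNReal.ofReal b • Measure.dirac y)
      = a + b - √(2 * (a * b)) := by
  rw [HK2_smul_dirac_smul_dirac hx hy ha hb (by linarith [pi_pos]), hd, cos_pi_div_four,
    sqrt_mul zero_le_two]
  ring

end DiracMasses

section Example

lemma pi_mul_sqrt_two_div_four_mem : π * √2 / 4 ∈ Ioc (π / 3) (π / 2) := by
  have h43 : 4 / 3 < √2 := lt_sqrt_of_sq_lt (by norm_num)
  have h2 : √2 ≤ 2 := sqrt_le_iff.mpr ⟨zero_le_two, by norm_num⟩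
  constructor <;> nlinarith [pi_pos]

lemma cos_pi_mul_sqrt_two_div_four_lt : cos (π * √2 / 4) < 1 / 2 := by
  rw [← cos_pi_div_three]
  exact cos_lt_cos_of_nonneg_of_le_pi (by positivity)
    (pi_mul_sqrt_two_div_four_mem.2.trans (by linarith [pi_pos])) pi_mul_sqrt_two_div_four_mem.1

lemma exists_pos_lt_of_lt_half {c : ℝ} (hc : c < 1 / 2) (K : ℝ) :
    ∃ s : ℝ, 0 < s ∧ 1 / 2 + s ^ 2 - s < 1 + s ^ 2 - 2 * s * c - K / 2 := by
  have hε : 0 < 1 - 2 * c := by linarith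
  set s := (|K| + 1) / (1 - 2 * c)
  refine ⟨s, by positivity, ?_⟩
  have hs : s * (1 - 2 * c) = |K| + 1 := div_mul_cancel₀ _ hε.ne'
  nlinarith [le_abs_self K, abs_nonneg K]

lemma HK2_smul_dirac_smul_dirac_of_dist_eq_pi_mul_sqrt_two_div_four {d : ℕ} {Ω : Set (Euc d)}
    {x y : Euc d} {s : ℝ} (hx : x ∈ Ω) (hy : y ∈ Ω) (hs : 0 < s) (hd : dist x y = π * √2 / 4) :
    HK2 Ω (ENNReal.ofReal 1 • Measure.dirac x) (ENNReal.ofReal (s ^ 2) • Measure.dirac y)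
      = 1 + s ^ 2 - 2 * s * cos (π * √2 / 4) := by
  rw [HK2_smul_dirac_smul_dirac hx hy one_pos (by positivity)
    (hd ▸ pi_mul_sqrt_two_div_four_mem.2), hd, one_mul, sqrt_sq hs.le]

lemma pt2_mem_square {p q : ℝ} (hp : p ∈ Icc 0 2) (hq : q ∈ Icc 0 2) :
    pt2 p q ∈ {x : Euc 2 | x 0 ∈ Icc (0:ℝ) 2 ∧ x 1 ∈ Icc (0:ℝ) 2} := by
  simpa [pt2] using ⟨hp, hq⟩

lemma dist_pt2_eq {a b a' b' r : ℝ} (hr : 0 ≤ r) (h : (a - a') ^ 2 + (b - b') ^ 2 = r ^ 2) :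
    dist (pt2 a b) (pt2 a' b') = r := by
  simp [pt2, EuclideanSpace.dist_eq, Fin.sum_univ_two, Real.dist_eq, h, sqrt_sq hr]

lemma dirac_eq_ofReal_one_smul {X : Type*} [MeasurableSpace X] (x : X) :
    Measure.dirac x = ENNReal.ofReal 1 • Measure.dirac x := by
  simp

lemma one_half_eq_ofReal : (1 / 2 : ℝ≥0∞) = ENNReal.ofReal (1 / 2) := by
  rw [ENNReal.ofReal_div_of_pos two_pos, ENNReal.ofReal_one, ENNReal.ofReal_ofNat]

variable {Ω : Set (Euc 2)}

lemma HK2_example_midpoint (hO : pt2 0 0 ∈ Ω) (hA : pt2 (π / 4) 0 ∈ Ω)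
    (hB : pt2 (π / 2) 0 ∈ Ω) :
    HK2 Ω (Measure.dirac (pt2 0 0)) (Measure.dirac (pt2 (π / 2) 0)) = 2 ∧
    HK2 Ω (Measure.dirac (pt2 0 0)) ((1 / 2 : ℝ≥0∞) • Measure.dirac (pt2 (π / 4) 0)) = 1 / 2 ∧
    HK2 Ω ((1 / 2 : ℝ≥0∞) • Measure.dirac (pt2 (π / 4) 0)) (Measure.dirac (pt2 (π / 2) 0))
      = 1 / 2 := by
  have hOB : dist (pt2 0 0) (pt2 (π / 2) 0) = π / 2 := dist_pt2_eq (by positivity) (by ring)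
  rw [dirac_eq_ofReal_one_smul (pt2 0 0), dirac_eq_ofReal_one_smul (pt2 (π / 2) 0),
    one_half_eq_ofReal, HK2_smul_dirac_smul_dirac hO hB one_pos one_pos hOB.le, hOB,
    cos_pi_div_two, HK2_smul_dirac_smul_dirac_of_dist_eq_pi_div_four hO hA one_pos one_half_pos
      (dist_pt2_eq (by positivity) (by ring)),
    HK2_smul_dirac_smul_dirac_of_dist_eq_pi_div_four hA hB one_half_pos one_pos
      (dist_pt2_eq (by positivity) (by ring))]
  norm_num

lemma HK2_example_apex (hO : pt2 0 0 ∈ Ω) (hA : pt2 (π / 4) 0 ∈ Ω) (hB : pt2 (π / 2) 0 ∈ Ω)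
    (hS : pt2 (π / 4) (π / 4) ∈ Ω) {s : ℝ} (hs : 0 < s) :
    HK2 Ω ((1 / 2 : ℝ≥0∞) • Measure.dirac (pt2 (π / 4) 0))
      (ENNReal.ofReal (s ^ 2) • Measure.dirac (pt2 (π / 4) (π / 4))) = 1 / 2 + s ^ 2 - s ∧
    HK2 Ω (Measure.dirac (pt2 0 0)) (ENNReal.ofReal (s ^ 2) • Measure.dirac (pt2 (π / 4) (π / 4)))
      = 1 + s ^ 2 - 2 * s * cos (π * √2 / 4) ∧
    HK2 Ω (Measure.dirac (pt2 (π / 2) 0))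
      (ENNReal.ofReal (s ^ 2) • Measure.dirac (pt2 (π / 4) (π / 4)))
      = 1 + s ^ 2 - 2 * s * cos (π * √2 / 4) := by
  have hdist : ∀ p ∈ ({0, π / 2} : Set ℝ),
      dist (pt2 p 0) (pt2 (π / 4) (π / 4)) = π * √2 / 4 := by
    rintro p (rfl | rfl) <;> refine dist_pt2_eq (by positivity) ?_ <;>
      linear_combination (-π ^ 2 / 16) * sq_sqrt (zero_le_two (α := ℝ))
  rw [dirac_eq_ofReal_one_smul (pt2 0 0), dirac_eq_ofReal_one_smul (pt2 (π / 2) 0),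
    one_half_eq_ofReal, HK2_smul_dirac_smul_dirac_of_dist_eq_pi_div_four hA hS one_half_pos
      (by positivity) (dist_pt2_eq (by positivity) (by ring)),
    HK2_smul_dirac_smul_dirac_of_dist_eq_pi_mul_sqrt_two_div_four hO hS hs (hdist 0 (by simp)),
    HK2_smul_dirac_smul_dirac_of_dist_eq_pi_mul_sqrt_two_div_four hB hS hs
      (hdist (π / 2) (by simp)), show 2 * (1 / 2 * s ^ 2) = s ^ 2 by ring, sqrt_sq hs.le]
  exact ⟨by ring, rfl, rfl⟩

end Example

theorem HK_not_semiconcave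
    (Ω : Set (Euc 2)) (hΩ : Ω = {x : Euc 2 | x 0 ∈ Icc (0:ℝ) 2 ∧ x 1 ∈ Icc (0:ℝ) 2})
    (μ₀ μ₁ ν : Measure (Euc 2))
    (hμ₀ : μ₀ = Measure.dirac (pt2 0 0))
    (hμ₁ : μ₁ = Measure.dirac (pt2 (Real.pi / 2) 0))
    (hν : ν = (1/2 : ℝ≥0∞) • Measure.dirac (pt2 (Real.pi / 4) 0)) :
    HK Ω μ₀ ν = HK Ω ν μ₁ ∧
    HK Ω μ₀ ν = (1/2) * HK Ω μ₀ μ₁ ∧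
    ∀ K : ℝ, ∃ b : ℝ, 0 < b ∧ ∃ y : ℝ, y ∈ Ioo 0 (Real.sqrt 3 * Real.pi / 4) ∧
      (HK Ω ν (ENNReal.ofReal b • Measure.dirac (pt2 (Real.pi / 4) y)))^2
        < (1/2) * (HK Ω μ₀ (ENNReal.ofReal b • Measure.dirac (pt2 (Real.pi / 4) y)))^2
          + (1/2) * (HK Ω μ₁ (ENNReal.ofReal b • Measure.dirac (pt2 (Real.pi / 4) y)))^2
          - (K/4) * (HK Ω μ₀ μ₁)^2 := by
  subst hμ₀ hμ₁ hν
  have hmem : ∀ {p q : ℝ}, p ∈ Icc 0 2 → q ∈ Icc 0 2 → pt2 p q ∈ Ω :=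
    fun hp hq => hΩ ▸ pt2_mem_square hp hq
  have h0 : (0 : ℝ) ∈ Icc 0 2 := by norm_num
  have hπ4 : π / 4 ∈ Icc (0 : ℝ) 2 := ⟨by positivity, by linarith [pi_le_four]⟩
  have hπ2 : π / 2 ∈ Icc (0 : ℝ) 2 := ⟨by positivity, by linarith [pi_le_four]⟩
  obtain ⟨hOB, hOA, hAB⟩ := HK2_example_midpoint (hmem h0 h0) (hmem hπ4 h0) (hmem hπ2 h0)
  refine ⟨by rw [HK, HK, hOA, hAB], ?_, fun K => ?_⟩
  · rw [HK, HK, hOA, hOB, ← sq_eq_sq₀ (sqrt_nonneg _) (by positivity), mul_pow, sq_sqrt,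
      sq_sqrt] <;> norm_num
  obtain ⟨s, hs, hlt⟩ := exists_pos_lt_of_lt_half cos_pi_mul_sqrt_two_div_four_lt K
  refine ⟨s ^ 2, by positivity, π / 4, ⟨by positivity, ?_⟩, ?_⟩
  · nlinarith [pi_pos, lt_sqrt_of_sq_lt (show (1 : ℝ) ^ 2 < 3 by norm_num)]
  obtain ⟨hAS, hOS, hBS⟩ :=
    HK2_example_apex (hmem h0 h0) (hmem hπ4 h0) (hmem hπ2 h0) (hmem hπ4 hπ4) hs
  rw [HK_sq, HK_sq, HK_sq, HK_sq, hOB, hAS, hOS, hBS]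
  linarith
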